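/- Let q > 0 be real and, for k ∈ ℝ, let M_q(k) be the 4×4 complex matrix with rows (3+q, −1−e^{ik}, 0, −1), (−1−e^{−ik}, 3−q, −1, 0), (0, −1, 3+q, −1−e^{ik}), (−1, 0, −1−e^{−ik}, 3−q). Then for every k ∈ ℝ the spectrum (over ℂ) of M_q(k) equals {3 − √(5+4cos k+q²), 3 + √(5+4cos k+q²), 3 − √(1+q²), 3 + √(1+q²)}, and ⋃_{k ∈ (−π,π]} spectrum(M_q(k)) = [3−√(9+q²), 3−√(1+q²)] ∪ [3+√(1+q²), 3+√(9+q²)] (real intervals regarded as subsets of ℂ). -/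
import Mathlib


open scoped Real

/-- The Floquet matrix of the Schrödinger operator on the zigzag nanotube `G_{2a₁}`
with potential `±q` alternately on the four fundamental vertices. -/
noncomputable def zigzagFloquet (q k : ℝ) : Matrix (Fin 4) (Fin 4) ℂ :=
  !![((3 + q : ℝ) : ℂ), -1 - Complex.exp (Complex.I * k), 0, -1;
     -1 - Complex.exp (-(Complex.I * k)), ((3 - q : ℝ) : ℂ), -1, 0;
     0, -1, ((3 + q : ℝ) : ℂ), -1 - Complex.exp (Complex.I * k);
     -1, 0, -1 - Complex.exp (-(Complex.I * k)), ((3 - q : ℝ) : ℂ)]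

open Matrix

theorem my_det_fin_four {R : Type*} [CommRing R] (A : Matrix (Fin 4) (Fin 4) R) :
    det A = A 0 0 * det !![A 1 1, A 1 2, A 1 3; A 2 1, A 2 2, A 2 3; A 3 1, A 3 2, A 3 3]
      - A 0 1 * det !![A 1 0, A 1 2, A 1 3; A 2 0, A 2 2, A 2 3; A 3 0, A 3 2, A 3 3]
      + A 0 2 * det !![A 1 0, A 1 1, A 1 3; A 2 0, A 2 1, A 2 3; A 3 0, A 3 1, A 3 3]
      - A 0 3 * det !![A 1 0, A 1 1, A 1 2; A 2 0, A 2 1, A 2 2; A 3 0, A 3 1, A 3 2] := by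
  rw [det_succ_row_zero, Fin.sum_univ_four]
  have e0 : A.submatrix Fin.succ (Fin.succAbove 0) =
      !![A 1 1, A 1 2, A 1 3; A 2 1, A 2 2, A 2 3; A 3 1, A 3 2, A 3 3] := by
    ext i j; fin_cases i <;> fin_cases j <;> rfl
  have e1 : A.submatrix Fin.succ (Fin.succAbove 1) =
      !![A 1 0, A 1 2, A 1 3; A 2 0, A 2 2, A 2 3; A 3 0, A 3 2, A 3 3] := by
    ext i j; fin_cases i <;> fin_cases j <;> rfl
  have e2 : A.submatrix Fin.succ (Fin.succAbove 2) =
      !![A 1 0, A 1 1, A 1 3; A 2 0, A 2 1, A 2 3; A 3 0, A 3 1, A 3 3] := by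
    ext i j; fin_cases i <;> fin_cases j <;> rfl
  have e3 : A.submatrix Fin.succ (Fin.succAbove 3) =
      !![A 1 0, A 1 1, A 1 2; A 2 0, A 2 1, A 2 2; A 3 0, A 3 1, A 3 2] := by
    ext i j; fin_cases i <;> fin_cases j <;> rfl
  rw [e0, e1, e2, e3]
  rw [show ((0 : Fin 4) : ℕ) = 0 from rfl, show ((1 : Fin 4) : ℕ) = 1 from rfl,
    show ((2 : Fin 4) : ℕ) = 2 from rfl, show ((3 : Fin 4) : ℕ) = 3 from rfl]
  ring

theorem det_eq (q k : ℝ) (z : ℂ) :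
    (z • (1 : Matrix (Fin 4) (Fin 4) ℂ) - zigzagFloquet q k).det =
      ((z - 3)^2 - ((5 + 4*Real.cos k + q^2 : ℝ) : ℂ)) *
      ((z - 3)^2 - ((1 + q^2 : ℝ) : ℂ)) := by
  set E := Complex.exp (Complex.I * k) with hE
  set F := Complex.exp (-(Complex.I * k)) with hF
  have h1 : E * F = 1 := by rw [hE, hF, ← Complex.exp_add]; simp
  have h2 : E + F = 2 * Complex.cos k := by
    rw [hE, hF, Complex.cos]; ring_nf
  have hm : (z • (1 : Matrix (Fin 4) (Fin 4) ℂ) - zigzagFloquet q k) =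
    !![z - (3 + (q:ℂ)), 1 + E, 0, 1;
       1 + F, z - (3 - (q:ℂ)), 1, 0;
       0, 1, z - (3 + (q:ℂ)), 1 + E;
       1, 0, 1 + F, z - (3 - (q:ℂ))] := by
    ext i j
    fin_cases i <;> fin_cases j <;>
      simp [zigzagFloquet, Matrix.one_apply, hE, hF] <;> push_cast <;> ring
  rw [hm, my_det_fin_four]
  simp [Matrix.det_fin_three, Complex.ofReal_cos]
  linear_combination (-2*((z-3)^2 - (q:ℂ)^2) + 6 + 2*(E+F) + E*F - 1) * h1 +
    (-2*((z-3)^2 - (q:ℂ)^2) + 2) * h2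

theorem spec_eq (q k : ℝ) : spectrum ℂ (zigzagFloquet q k) =
    {((3 - Real.sqrt (5 + 4*Real.cos k + q^2) : ℝ) : ℂ),
     ((3 + Real.sqrt (5 + 4*Real.cos k + q^2) : ℝ) : ℂ),
     ((3 - Real.sqrt (1 + q^2) : ℝ) : ℂ),
     ((3 + Real.sqrt (1 + q^2) : ℝ) : ℂ)} := by
  have hA : (0:ℝ) ≤ 5 + 4*Real.cos k + q^2 := by
    nlinarith [Real.neg_one_le_cos k, sq_nonneg q]
  have hB : (0:ℝ) ≤ 1 + q^2 := by positivity
  have hsA : ((Real.sqrt (5 + 4*Real.cos k + q^2) : ℝ) : ℂ)^2 =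
      ((5 + 4*Real.cos k + q^2 : ℝ) : ℂ) := by
    exact_mod_cast congrArg (fun x : ℝ => (x : ℂ)) (Real.sq_sqrt hA)
  have hsB : ((Real.sqrt (1 + q^2) : ℝ) : ℂ)^2 = ((1 + q^2 : ℝ) : ℂ) := by
    exact_mod_cast congrArg (fun x : ℝ => (x : ℂ)) (Real.sq_sqrt hB)
  ext z
  have hspec : z ∈ spectrum ℂ (zigzagFloquet q k) ↔
      (z • (1 : Matrix (Fin 4) (Fin 4) ℂ) - zigzagFloquet q k).det = 0 := by
    rw [spectrum.mem_iff, Algebra.algebraMap_eq_smul_one, Matrix.isUnit_iff_isUnit_det]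
    simp [isUnit_iff_ne_zero]
  rw [hspec, det_eq]
  set sA := Real.sqrt (5 + 4*Real.cos k + q^2)
  set sB := Real.sqrt (1 + q^2)
  have hfac : ((z - 3)^2 - ((5 + 4*Real.cos k + q^2 : ℝ) : ℂ)) *
      ((z - 3)^2 - ((1 + q^2 : ℝ) : ℂ)) =
      (z - ((3 - sA : ℝ) : ℂ)) * (z - ((3 + sA : ℝ) : ℂ)) *
      ((z - ((3 - sB : ℝ) : ℂ)) * (z - ((3 + sB : ℝ) : ℂ))) := by
    push_cast at hsA hsB ⊢
    linear_combination ((z-3)^2 - (1 + (q:ℂ)^2)) * hsA +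
      ((z-3)^2 - ((sA : ℝ) : ℂ)^2) * hsB
  rw [hfac]
  simp only [mul_eq_zero, sub_eq_zero, Set.mem_insert_iff, Set.mem_singleton_iff]
  tauto

theorem union_eq (q : ℝ) :
    (⋃ k ∈ Set.Ioc (-π) π, spectrum ℂ (zigzagFloquet q k)) =
      (fun x : ℝ => (x : ℂ)) ''
        (Set.Icc (3 - Real.sqrt (9 + q^2)) (3 - Real.sqrt (1 + q^2)) ∪
         Set.Icc (3 + Real.sqrt (1 + q^2)) (3 + Real.sqrt (9 + q^2))) := by
  have hs1 : (0:ℝ) ≤ Real.sqrt (1 + q^2) := Real.sqrt_nonneg _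
  have hs9 : (0:ℝ) ≤ Real.sqrt (9 + q^2) := Real.sqrt_nonneg _
  have h19 : Real.sqrt (1 + q^2) ≤ Real.sqrt (9 + q^2) :=
    Real.sqrt_le_sqrt (by nlinarith)
  have hq1 : Real.sqrt (1+q^2)^2 = 1 + q^2 := Real.sq_sqrt (by positivity)
  have hq9 : Real.sqrt (9+q^2)^2 = 9 + q^2 := Real.sq_sqrt (by positivity)
  ext z
  simp only [Set.mem_iUnion, Set.mem_image, Set.mem_union, Set.mem_Icc, exists_prop]
  constructor
  · rintro ⟨k, hk, hz⟩
    rw [spec_eq] at hz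
    have h1k : Real.sqrt (1+q^2) ≤ Real.sqrt (5 + 4*Real.cos k + q^2) :=
      Real.sqrt_le_sqrt (by nlinarith [Real.neg_one_le_cos k])
    have h9k : Real.sqrt (5 + 4*Real.cos k + q^2) ≤ Real.sqrt (9+q^2) :=
      Real.sqrt_le_sqrt (by nlinarith [Real.cos_le_one k])
    simp only [Set.mem_insert_iff, Set.mem_singleton_iff] at hz
    rcases hz with h | h | h | h
    · exact ⟨_, Or.inl ⟨by linarith, by linarith⟩, h.symm⟩
    · exact ⟨_, Or.inr ⟨by linarith, by linarith⟩, h.symm⟩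
    · exact ⟨_, Or.inl ⟨by linarith, le_refl _⟩, h.symm⟩
    · exact ⟨_, Or.inr ⟨le_refl _, by linarith⟩, h.symm⟩
  · rintro ⟨x, hx, rfl⟩
    rcases hx with ⟨hx1, hx2⟩ | ⟨hx1, hx2⟩
    · -- x ∈ [3−√(9+q²), 3−√(1+q²)], use k = arccos (((3−x)²−5−q²)/4)
      have hge : Real.sqrt (1+q^2) ≤ 3 - x := by linarith
      have hle : 3 - x ≤ Real.sqrt (9+q^2) := by linarith
      have hl : 1 + q^2 ≤ (3-x)^2 := by nlinarith
      have hu : (3-x)^2 ≤ 9 + q^2 := by nlinarith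
      set c0 : ℝ := ((3-x)^2 - 5 - q^2)/4 with hc0
      have hc1 : -1 ≤ c0 := by rw [hc0]; linarith
      have hc2 : c0 ≤ 1 := by rw [hc0]; linarith
      refine ⟨Real.arccos c0, ⟨lt_of_lt_of_le (by linarith [Real.pi_pos]) (Real.arccos_nonneg c0),
        Real.arccos_le_pi c0⟩, ?_⟩
      rw [spec_eq]
      have hcos : Real.cos (Real.arccos c0) = c0 := Real.cos_arccos hc1 hc2
      have hval : 5 + 4*Real.cos (Real.arccos c0) + q^2 = (3-x)^2 := by
        rw [hcos, hc0]; ring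
      have hsq : Real.sqrt (5 + 4*Real.cos (Real.arccos c0) + q^2) = 3 - x := by
        rw [hval]; exact Real.sqrt_sq (by linarith)
      left
      rw [hsq]; norm_num
    · have hge : Real.sqrt (1+q^2) ≤ x - 3 := by linarith
      have hle : x - 3 ≤ Real.sqrt (9+q^2) := by linarith
      have hl : 1 + q^2 ≤ (x-3)^2 := by nlinarith
      have hu : (x-3)^2 ≤ 9 + q^2 := by nlinarith
      set c0 : ℝ := ((x-3)^2 - 5 - q^2)/4 with hc0
      have hc1 : -1 ≤ c0 := by rw [hc0]; linarith
      have hc2 : c0 ≤ 1 := by rw [hc0]; linarith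
      refine ⟨Real.arccos c0, ⟨lt_of_lt_of_le (by linarith [Real.pi_pos]) (Real.arccos_nonneg c0),
        Real.arccos_le_pi c0⟩, ?_⟩
      rw [spec_eq]
      have hcos : Real.cos (Real.arccos c0) = c0 := Real.cos_arccos hc1 hc2
      have hval : 5 + 4*Real.cos (Real.arccos c0) + q^2 = (x-3)^2 := by
        rw [hcos, hc0]; ring
      have hsq : Real.sqrt (5 + 4*Real.cos (Real.arccos c0) + q^2) = x - 3 := by
        rw [hval]; exact Real.sqrt_sq (by linarith)
      right; left
      rw [hsq]; norm_num

/-- the spectrum of the zigzag Floquet matrix is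
`{3 ± √(5+4cos k+q²), 3 ± √(1+q²)}`, and the union over `k ∈ (−π,π]` is
`[3−√(9+q²), 3−√(1+q²)] ∪ [3+√(1+q²), 3+√(9+q²)]`. -/

theorem stmt_14 (q : ℝ) (hq : 0 < q) :
    (∀ k : ℝ, spectrum ℂ (zigzagFloquet q k) =
      {((3 - Real.sqrt (5 + 4*Real.cos k + q^2) : ℝ) : ℂ),
       ((3 + Real.sqrt (5 + 4*Real.cos k + q^2) : ℝ) : ℂ),
       ((3 - Real.sqrt (1 + q^2) : ℝ) : ℂ),
       ((3 + Real.sqrt (1 + q^2) : ℝ) : ℂ)}) ∧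
    (⋃ k ∈ Set.Ioc (-π) π, spectrum ℂ (zigzagFloquet q k)) =
      (fun x : ℝ => (x : ℂ)) ''
        (Set.Icc (3 - Real.sqrt (9 + q^2)) (3 - Real.sqrt (1 + q^2)) ∪
         Set.Icc (3 + Real.sqrt (1 + q^2)) (3 + Real.sqrt (9 + q^2))) := by
  exact ⟨spec_eq q, union_eq q⟩
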